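/- arXiv:2605.07265 — 3 statements merged into one kernel-verified Lean document; each statement's English description precedes it below -/
import Mathlib

section
/- Let G be a graph on n vertices with minimum degree at least δn, let (L,R) be a partition of V with OPT = |E(L,R)|, and fix a with 0 < a < 1/6. Let X be a set of vertices such that every v ∈ X∩L satisfies |N(v)∩R| ≥ (1/2 − 3a)·deg(v) and every v ∈ X∩R satisfies |N(v)∩L| ≥ (1/2 − 3a)·deg(v). Then vol(X) ≤ 2·OPT/(1/2 − 3a) and |X| ≤ 2·OPT/((1/2 − 3a)·δn). -/
open Finset

namespace SimpleGraph

variable {V : Type*} [DecidableEq V] (G : SimpleGraph V) [DecidableRel G.Adj] [Fintype V]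

theorem sum_card_neighborFinset_inter_comm (A B : Finset V) :
    ∑ v ∈ A, #(G.neighborFinset v ∩ B) = ∑ v ∈ B, #(G.neighborFinset v ∩ A) := by
  have hfilter (v : V) (S : Finset V) : G.neighborFinset v ∩ S = {u ∈ S | G.Adj v u} := by
    ext u; simp [and_comm]
  simp_rw [hfilter]
  refine (sum_card_bipartiteAbove_eq_sum_card_bipartiteBelow (r := G.Adj)).trans ?_
  exact sum_congr rfl fun v _ => by simp only [bipartiteBelow, G.adj_comm]

theorem mul_sum_degree_inter_le {c : ℝ} {X A : Finset V} (B : Finset V)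
    (h : ∀ v ∈ X ∩ A, c * G.degree v ≤ #(G.neighborFinset v ∩ B)) :
    c * ∑ v ∈ X ∩ A, (G.degree v : ℝ) ≤ ∑ v ∈ A, (#(G.neighborFinset v ∩ B) : ℝ) :=
  calc c * ∑ v ∈ X ∩ A, (G.degree v : ℝ)
      ≤ ∑ v ∈ X ∩ A, (#(G.neighborFinset v ∩ B) : ℝ) := by
        rw [mul_sum]; exact sum_le_sum h
    _ ≤ ∑ v ∈ A, (#(G.neighborFinset v ∩ B) : ℝ) :=
        sum_le_sum_of_subset_of_nonneg inter_subset_right fun _ _ _ => by positivity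

/-- Each side of the cut sees every cut edge once, so the two sides together count it twice. -/
theorem mul_sum_degree_le_two_mul_cut {c : ℝ} (hc : 0 ≤ c) {L R X : Finset V}
    (hX : X ⊆ L ∪ R)
    (hXL : ∀ v ∈ X ∩ L, c * G.degree v ≤ #(G.neighborFinset v ∩ R))
    (hXR : ∀ v ∈ X ∩ R, c * G.degree v ≤ #(G.neighborFinset v ∩ L)) :
    c * ∑ v ∈ X, (G.degree v : ℝ) ≤ 2 * ∑ v ∈ L, (#(G.neighborFinset v ∩ R) : ℝ) := by
  have hsplit : ∑ v ∈ X, (G.degree v : ℝ)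
      ≤ ∑ v ∈ X ∩ L, (G.degree v : ℝ) + ∑ v ∈ X ∩ R, (G.degree v : ℝ) := by
    rw [← sum_union_inter, ← inter_union_distrib_left, inter_eq_left.mpr hX]
    exact le_add_of_nonneg_right (by positivity)
  have hsymm : ∑ v ∈ R, (#(G.neighborFinset v ∩ L) : ℝ)
      = ∑ v ∈ L, (#(G.neighborFinset v ∩ R) : ℝ) := by
    exact_mod_cast G.sum_card_neighborFinset_inter_comm R L
  have hL := G.mul_sum_degree_inter_le R hXL
  have hR := G.mul_sum_degree_inter_le L hXR
  linarith [mul_le_mul_of_nonneg_left hsplit hc]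

end SimpleGraph

theorem stmt4_general {V : Type*} [Fintype V] [DecidableEq V] (G : SimpleGraph V)
    [DecidableRel G.Adj] (δ a : ℝ) (hδ : 0 < δ) (ha1 : a < 1 / 6)
    (hdeg : ∀ v : V, δ * Fintype.card V ≤ G.degree v)
    (L R : Finset V) (hpart : L ∪ R = Finset.univ)
    (X : Finset V)
    (hXL : ∀ v ∈ X ∩ L, (1 / 2 - 3 * a) * (G.degree v : ℝ) ≤ ((G.neighborFinset v ∩ R).card : ℝ))
    (hXR : ∀ v ∈ X ∩ R, (1 / 2 - 3 * a) * (G.degree v : ℝ) ≤ ((G.neighborFinset v ∩ L).card : ℝ)) :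
    (∑ v ∈ X, (G.degree v : ℝ))
        ≤ 2 * (∑ v ∈ L, ((G.neighborFinset v ∩ R).card : ℝ)) / (1 / 2 - 3 * a) ∧
      (X.card : ℝ) ≤ 2 * (∑ v ∈ L, ((G.neighborFinset v ∩ R).card : ℝ))
        / ((1 / 2 - 3 * a) * (δ * Fintype.card V)) := by
  have hc : 0 < 1 / 2 - 3 * a := by linarith
  have hvol := G.mul_sum_degree_le_two_mul_cut hc.le (hpart ▸ subset_univ X) hXL hXR
  refine ⟨by rw [le_div_iff₀ hc]; linarith, ?_⟩
  obtain rfl | ⟨v, -⟩ := X.eq_empty_or_nonempty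
  · simp only [card_empty, Nat.cast_zero]
    positivity
  have hn : (0 : ℝ) < Fintype.card V := by exact_mod_cast Fintype.card_pos_iff.mpr ⟨v⟩
  have hcard : #X • (δ * Fintype.card V) ≤ ∑ v ∈ X, (G.degree v : ℝ) :=
    card_nsmul_le_sum X _ _ fun v _ => hdeg v
  rw [nsmul_eq_mul] at hcard
  rw [le_div_iff₀ (by positivity)]
  linarith [mul_le_mul_of_nonneg_left hcard hc.le]

theorem stmt4 {V : Type*} [Fintype V] [DecidableEq V] (G : SimpleGraph V)
    [DecidableRel G.Adj] (δ a : ℝ) (hδ : 0 < δ) (ha0 : 0 < a) (ha1 : a < 1 / 6)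
    (hdeg : ∀ v : V, δ * Fintype.card V ≤ G.degree v)
    (L R : Finset V) (hpart : L ∪ R = Finset.univ) (hdisj : Disjoint L R)
    (X : Finset V)
    (hXL : ∀ v ∈ X ∩ L, (1 / 2 - 3 * a) * (G.degree v : ℝ) ≤ ((G.neighborFinset v ∩ R).card : ℝ))
    (hXR : ∀ v ∈ X ∩ R, (1 / 2 - 3 * a) * (G.degree v : ℝ) ≤ ((G.neighborFinset v ∩ L).card : ℝ)) :
    (∑ v ∈ X, (G.degree v : ℝ))
        ≤ 2 * (∑ v ∈ L, ((G.neighborFinset v ∩ R).card : ℝ)) / (1 / 2 - 3 * a) ∧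
      (X.card : ℝ) ≤ 2 * (∑ v ∈ L, ((G.neighborFinset v ∩ R).card : ℝ))
        / ((1 / 2 - 3 * a) * (δ * Fintype.card V)) :=
  stmt4_general G δ a hδ ha1 hdeg L R hpart X hXL hXR
end

section
/- Let x : P → ℝ be a nonnegative vector indexed by a finite set P with Σ_P x_P ≤ n, weights Δ : P → ℝ≥0 with Δ_P ≤ n for all P, and κ > 0 with |P| < n and |P| < κ. If Σ_P Δ_P x_P ≤ M and Σ_P (Δ_P + κ) x_P ≥ m, then the rounded vector y_P = ⌊x_P⌋ satisfies Σ_P (Δ_P + κ) y_P ≤ M + κn and Σ_P Δ_P y_P ≥ m − 3κn. -/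
open Finset

theorem stmt14 {ι : Type*} [Fintype ι] (x Δ : ι → ℝ) (n κ m M : ℝ)
    (hn : 0 < n) (hκ : 0 < κ) (hm : 0 < m) (hM : 0 < M)
    (hx0 : ∀ i, 0 ≤ x i) (hxsum : ∑ i, x i ≤ n)
    (hΔ0 : ∀ i, 0 ≤ Δ i) (hΔn : ∀ i, Δ i ≤ n)
    (hcard_n : (Fintype.card ι : ℝ) < n) (hcard_κ : (Fintype.card ι : ℝ) < κ)
    (hupper : ∑ i, Δ i * x i ≤ M) (hlower : m ≤ ∑ i, (Δ i + κ) * x i) :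
    (∑ i, (Δ i + κ) * (⌊x i⌋ : ℝ)) ≤ M + κ * n ∧
      m - 3 * κ * n ≤ ∑ i, Δ i * (⌊x i⌋ : ℝ) := by
  have hfl : ∀ i, (⌊x i⌋ : ℝ) ≤ x i := fun i => Int.floor_le _
  constructor
  · have h1 : (∑ i, (Δ i + κ) * (⌊x i⌋ : ℝ)) ≤ ∑ i, (Δ i + κ) * x i :=
      Finset.sum_le_sum fun i _ =>
        mul_le_mul_of_nonneg_left (hfl i) (by have := hΔ0 i; linarith)
    have h2 : ∑ i, (Δ i + κ) * x i = (∑ i, Δ i * x i) + κ * ∑ i, x i := by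
      rw [Finset.mul_sum, ← Finset.sum_add_distrib]
      exact Finset.sum_congr rfl fun i _ => by ring
    have : κ * ∑ i, x i ≤ κ * n := mul_le_mul_of_nonneg_left hxsum hκ.le
    linarith
  · have hfrac : ∑ i, Δ i * (x i - (⌊x i⌋ : ℝ)) ≤ κ * n := by
      have h1 : ∑ i, Δ i * (x i - (⌊x i⌋ : ℝ)) ≤ ∑ _i : ι, n :=
        Finset.sum_le_sum fun i _ => by
          have h2 : x i - (⌊x i⌋ : ℝ) ≤ 1 := by
            have := Int.lt_floor_add_one (x i); linarith
          calc Δ i * (x i - (⌊x i⌋ : ℝ)) ≤ n * 1 :=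
                mul_le_mul (hΔn i) h2 (by have := hfl i; linarith) hn.le
            _ = n := mul_one n
      simp only [Finset.sum_const, Finset.card_univ, nsmul_eq_mul] at h1
      nlinarith
    have h2 : ∑ i, (Δ i + κ) * x i = (∑ i, Δ i * x i) + κ * ∑ i, x i := by
      rw [Finset.mul_sum, ← Finset.sum_add_distrib]
      exact Finset.sum_congr rfl fun i _ => by ring
    have h3 : ∑ i, Δ i * (x i - (⌊x i⌋ : ℝ)) =
        (∑ i, Δ i * x i) - ∑ i, Δ i * (⌊x i⌋ : ℝ) := by
      rw [← Finset.sum_sub_distrib]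
      exact Finset.sum_congr rfl fun i _ => by ring
    have : κ * ∑ i, x i ≤ κ * n := mul_le_mul_of_nonneg_left hxsum hκ.le
    nlinarith
end

section
/- Let G = (V,E) be a graph (possibly not dense) and t, ζ parameters for BalancedSeparator. Form G' by adding to G a disjoint clique K on t(1+ζ)+n vertices, where n = |V|. Then every S ⊆ V(G') with t(1−ζ) ≤ |S| ≤ t(1+ζ) can be converted to T ⊆ V with t(1−ζ) ≤ |T| ≤ t(1+ζ) and |E_G(T, V∖T)| ≤ |E_{G'}(S, V(G')∖S)|. Consequently, the minimum cut size over feasible sets in G equals the minimum over feasible sets in G'. -/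
open Finset

/-- The disjoint union of a graph `G` and a clique on `Fin m`. -/
def cliqueSum {V : Type*} (G : SimpleGraph V) (m : ℕ) : SimpleGraph (V ⊕ Fin m) where
  Adj x y :=
    match x, y with
    | Sum.inl a, Sum.inl b => G.Adj a b
    | Sum.inr a, Sum.inr b => a ≠ b
    | _, _ => False
  symm := ⟨by
    rintro (a | a) (b | b) h
    · exact G.adj_symm h
    · exact h.elim
    · exact h.elim
    · exact h.symm⟩
  loopless := ⟨by
    rintro (a | a) h
    · exact G.irrefl h
    · exact h rfl⟩

instance cliqueSum.decidableAdj {V : Type*} (G : SimpleGraph V) [DecidableRel G.Adj]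
    (m : ℕ) : DecidableRel (cliqueSum G m).Adj := fun x y =>
  match x, y with
  | Sum.inl a, Sum.inl b => inferInstanceAs (Decidable (G.Adj a b))
  | Sum.inr a, Sum.inr b => inferInstanceAs (Decidable (a ≠ b))
  | Sum.inl _, Sum.inr _ => inferInstanceAs (Decidable False)
  | Sum.inr _, Sum.inl _ => inferInstanceAs (Decidable False)

/-!
The cut of `S` in `G' = G + K` is the cut of `X = S ∩ V` in `G` plus `|Y| (|K| - |Y|)`,
where `Y = S ∩ K`. Since `|Y| ≤ |S| ≤ t(1+ζ)` and `|K| = t(1+ζ) + n`, every vertex of `Y` has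
at least `n` clique neighbours outside `S`. Padding `X` with at most `|Y|` further vertices of
`G` to reach the lower size bound adds at most `n` cut edges per new vertex, so the padded set
is feasible and its cut in `G` is at most the cut of `S`. Conversely a feasible `T ⊆ V` has the
same cut in `G'` as in `G`.
-/

namespace SimpleGraph

section cliqueSum

variable {V : Type*} (G : SimpleGraph V) (m : ℕ)

@[simp] lemma cliqueSum_adj_inl_inl {a b : V} :
    (cliqueSum G m).Adj (.inl a) (.inl b) ↔ G.Adj a b :=
  Iff.rfl

@[simp] lemma cliqueSum_adj_inr_inr {a b : Fin m} :
    (cliqueSum G m).Adj (.inr a) (.inr b) ↔ a ≠ b :=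
  Iff.rfl

@[simp] lemma not_cliqueSum_adj_inl_inr {a : V} {b : Fin m} :
    ¬(cliqueSum G m).Adj (.inl a) (.inr b) :=
  id

@[simp] lemma not_cliqueSum_adj_inr_inl {a : Fin m} {b : V} :
    ¬(cliqueSum G m).Adj (.inr a) (.inl b) :=
  id

end cliqueSum

variable {V : Type*} [Fintype V] [DecidableEq V] (G : SimpleGraph V) [DecidableRel G.Adj]

def cutSize (S : Finset V) : ℕ :=
  ∑ v ∈ S, #(G.neighborFinset v ∩ Sᶜ)

lemma cutSize_le_cutSize_add_card_sdiff_mul {X T : Finset V} (hXT : X ⊆ T) :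
    G.cutSize T ≤ G.cutSize X + #(T \ X) * Fintype.card V := by
  rw [cutSize, cutSize, ← sum_sdiff hXT, add_comm, ← smul_eq_mul, ← sum_const]
  refine add_le_add (sum_le_sum fun v _ => ?_) (sum_le_sum fun v _ => card_le_univ _)
  exact card_le_card (inter_subset_inter_left (compl_subset_compl.mpr hXT))

lemma cliqueSum_neighborFinset_inl_inter_compl (m : ℕ) (S : Finset (V ⊕ Fin m)) (a : V) :
    (cliqueSum G m).neighborFinset (.inl a) ∩ Sᶜ =
      (G.neighborFinset a ∩ S.toLeftᶜ).map .inl := by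
  ext (b | b) <;> simp

lemma cliqueSum_neighborFinset_inr_inter_compl (m : ℕ) {S : Finset (V ⊕ Fin m)} {a : Fin m}
    (ha : .inr a ∈ S) :
    (cliqueSum G m).neighborFinset (.inr a) ∩ Sᶜ = S.toRightᶜ.map .inr := by
  ext (b | b)
  · simp
  · simpa using fun hb hab => hb (hab ▸ ha)

lemma cutSize_cliqueSum (m : ℕ) (S : Finset (V ⊕ Fin m)) :
    (cliqueSum G m).cutSize S = G.cutSize S.toLeft + #S.toRight * (m - #S.toRight) := by
  rw [cutSize, sum_sum_eq_sum_toLeft_add_sum_toRight, cutSize, ← smul_eq_mul, ← sum_const]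
  congr 1
  · refine sum_congr rfl fun a _ => ?_
    rw [cliqueSum_neighborFinset_inl_inter_compl, card_map]
  · refine sum_congr rfl fun a ha => ?_
    rw [cliqueSum_neighborFinset_inr_inter_compl G m (mem_toRight.mp ha), card_map, card_compl,
      Fintype.card_fin]

lemma cutSize_cliqueSum_map_inl (m : ℕ) (T : Finset V) :
    (cliqueSum G m).cutSize (T.map .inl) = G.cutSize T := by
  simp [← disjSum_empty, cutSize_cliqueSum]

lemma exists_cutSize_le_cutSize_cliqueSum {m k : ℕ} (S : Finset (V ⊕ Fin m)) (hkS : k ≤ #S)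
    (hkV : k ≤ Fintype.card V) (hm : #S + Fintype.card V ≤ m) :
    ∃ T : Finset V, k ≤ #T ∧ #T ≤ #S ∧ G.cutSize T ≤ (cliqueSum G m).cutSize S := by
  obtain ⟨T, hXT, hT⟩ :=
    exists_superset_card_eq (le_max_left #S.toLeft k) (max_le (card_le_univ _) hkV)
  have hS : #S.toLeft + #S.toRight = #S := card_toLeft_add_card_toRight
  refine ⟨T, hT ▸ le_max_right _ _, hT ▸ max_le card_toLeft_le hkS, ?_⟩
  calc G.cutSize T ≤ G.cutSize S.toLeft + #(T \ S.toLeft) * Fintype.card V :=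
        G.cutSize_le_cutSize_add_card_sdiff_mul hXT
    _ ≤ G.cutSize S.toLeft + #S.toRight * (m - #S.toRight) := by
        rw [card_sdiff_of_subset hXT, hT]
        gcongr <;> omega
    _ = (cliqueSum G m).cutSize S := (G.cutSize_cliqueSum m S).symm

end SimpleGraph

open SimpleGraph

theorem stmt18_general {V : Type*} [Fintype V] [DecidableEq V] (G : SimpleGraph V)
    [DecidableRel G.Adj] (t m : ℕ) (ζ : ℝ)
    (htn : (t : ℝ) * (1 + ζ) ≤ Fintype.card V)
    (hm : (m : ℝ) = t * (1 + ζ) + Fintype.card V) :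
    (∀ S : Finset (V ⊕ Fin m),
        (t : ℝ) * (1 - ζ) ≤ S.card → (S.card : ℝ) ≤ t * (1 + ζ) →
        ∃ T : Finset V, (t : ℝ) * (1 - ζ) ≤ T.card ∧ (T.card : ℝ) ≤ t * (1 + ζ) ∧
          (∑ v ∈ T, ((G.neighborFinset v ∩ Tᶜ).card : ℝ))
            ≤ ∑ v ∈ S, (((cliqueSum G m).neighborFinset v ∩ Sᶜ).card : ℝ)) ∧
      ∀ T : Finset V, (t : ℝ) * (1 - ζ) ≤ T.card → (T.card : ℝ) ≤ t * (1 + ζ) →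
        ∃ S : Finset (V ⊕ Fin m),
          (t : ℝ) * (1 - ζ) ≤ S.card ∧ (S.card : ℝ) ≤ t * (1 + ζ) ∧
          (∑ v ∈ S, (((cliqueSum G m).neighborFinset v ∩ Sᶜ).card : ℝ))
            = ∑ v ∈ T, ((G.neighborFinset v ∩ Tᶜ).card : ℝ) := by
  -- after this, both sums are `cutSize` unfolded
  simp only [← Nat.cast_sum, Nat.cast_le, Nat.cast_inj]
  refine ⟨fun S hlo hhi => ?_, fun T hlo hhi => ?_⟩
  · have hkS : ⌈(t : ℝ) * (1 - ζ)⌉₊ ≤ #S := Nat.ceil_le.mpr hlo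
    have hSV : #S ≤ Fintype.card V := by exact_mod_cast hhi.trans htn
    have hSm : #S + Fintype.card V ≤ m := by
      have : (#S : ℝ) + Fintype.card V ≤ m := by rw [hm]; linarith
      exact_mod_cast this
    obtain ⟨T, hkT, hTS, hcut⟩ :=
      G.exists_cutSize_le_cutSize_cliqueSum S hkS (hkS.trans hSV) hSm
    exact ⟨T, Nat.ceil_le.mp hkT, le_trans (by exact_mod_cast hTS) hhi, hcut⟩
  · exact ⟨T.map .inl, by simpa using hlo, by simpa using hhi, G.cutSize_cliqueSum_map_inl m T⟩

theorem stmt18 {V : Type*} [Fintype V] [DecidableEq V] (G : SimpleGraph V)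
    [DecidableRel G.Adj] (t m : ℕ) (ζ : ℝ) (hζ : 0 < ζ)
    (ht1 : 1 ≤ t) (ht2 : (t : ℝ) ≤ Fintype.card V / 2)
    (htn : (t : ℝ) * (1 + ζ) ≤ Fintype.card V)
    (hm : (m : ℝ) = t * (1 + ζ) + Fintype.card V) :
    (∀ S : Finset (V ⊕ Fin m),
        (t : ℝ) * (1 - ζ) ≤ S.card → (S.card : ℝ) ≤ t * (1 + ζ) →
        ∃ T : Finset V, (t : ℝ) * (1 - ζ) ≤ T.card ∧ (T.card : ℝ) ≤ t * (1 + ζ) ∧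
          (∑ v ∈ T, ((G.neighborFinset v ∩ Tᶜ).card : ℝ))
            ≤ ∑ v ∈ S, (((cliqueSum G m).neighborFinset v ∩ Sᶜ).card : ℝ)) ∧
      ∀ T : Finset V, (t : ℝ) * (1 - ζ) ≤ T.card → (T.card : ℝ) ≤ t * (1 + ζ) →
        ∃ S : Finset (V ⊕ Fin m),
          (t : ℝ) * (1 - ζ) ≤ S.card ∧ (S.card : ℝ) ≤ t * (1 + ζ) ∧
          (∑ v ∈ S, (((cliqueSum G m).neighborFinset v ∩ Sᶜ).card : ℝ))
            = ∑ v ∈ T, ((G.neighborFinset v ∩ Tᶜ).card : ℝ) :=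
  stmt18_general G t m ζ htn hm
end
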